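/- arXiv:2401.04216 — 2 statements merged into one kernel-verified Lean document; each statement's English description precedes it below -/
import Mathlib

section
/- Let R be a commutative ring and n ≥ 1, k ≥ 1. Define d_k^{tw} : (R^{⊗n})^{⊗(k+1)} → (R^{⊗n})^{⊗k} as the composite that first cyclically moves the last tensor factor (a copy of R^{⊗n}) to the front, then applies the automorphism of that copy of R^{⊗n} cyclically moving its last R-coordinate to the front, and then multiplies the first two copies of R^{⊗n} together coordinatewise. Define d_k^{sd} : (R^{⊗(k+1)})^{⊗n} → (R^{⊗k})^{⊗n} as the map applying in each of the n factors the last face map of the cyclic bar construction on the previous factor, i.e., on pure tensors it sends (r_{0,1} ⊗ ⋯ ⊗ r_{k,1}) ⊗ ⋯ ⊗ (r_{0,n} ⊗ ⋯ ⊗ r_{k,n}) to (r_{k,n}·r_{0,1} ⊗ r_{1,1} ⊗ ⋯ ⊗ r_{k-1,1}) ⊗ (r_{k,1}·r_{0,2} ⊗ r_{1,2} ⊗ ⋯ ⊗ r_{k-1,2}) ⊗ ⋯ ⊗ (r_{k,n-1}·r_{0,n} ⊗ r_{1,n} ⊗ ⋯ ⊗ r_{k-1,n}). Then the transpose isomorphisms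 T_{k+1} : (R^{⊗n})^{⊗(k+1)} → (R^{⊗(k+1)})^{⊗n} and T_k intertwine these maps: T_k ∘ d_k^{tw} = d_k^{sd} ∘ T_{k+1}. -/
open PiTensorProduct
open scoped TensorProduct
set_option synthInstance.maxHeartbeats 1000000
set_option maxHeartbeats 1000000

/-- Two multilinear maps agreeing on spanning sets in each coordinate are equal. -/
theorem multilinear_ext_of_span {ι : Type*} [Fintype ι] [DecidableEq ι]
    {N : ι → Type*} {P : Type*} [∀ i, AddCommMonoid (N i)] [AddCommGroup P]
    [∀ i, Module ℤ (N i)] [Module ℤ P]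
    (f g : MultilinearMap ℤ N P) (S : ∀ i, Set (N i))
    (hS : ∀ i, Submodule.span ℤ (S i) = ⊤)
    (h : ∀ x : ∀ i, N i, (∀ i, x i ∈ S i) → f x = g x) : f = g := by
  have key : ∀ A : Finset ι, ∀ x : ∀ i, N i,
      (∀ i, i ∉ A → x i ∈ S i) → f x = g x := by
    intro A
    induction A using Finset.induction_on with
    | empty => intro x hx; exact h x (fun i => hx i (by simp))
    | @insert a A ha ih =>
      intro x hx
      have hxa : x a ∈ Submodule.span ℤ (S a) := by rw [hS a]; trivial
      have : ∀ y ∈ Submodule.span ℤ (S a),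
          f (Function.update x a y) = g (Function.update x a y) := by
        intro y hy
        induction hy using Submodule.span_induction with
        | mem y hy =>
          apply ih
          intro i hi
          rcases eq_or_ne i a with rfl | hne
          · simpa using hy
          · rw [Function.update_of_ne hne]
            exact hx i (by simp [hi, hne])
        | zero => rw [f.map_update_zero, g.map_update_zero]
        | add y z _ _ hy hz => rw [f.map_update_add, g.map_update_add, hy, hz]
        | smul c y _ hy => rw [f.map_update_smul, g.map_update_smul, hy]
      have := this (x a) hxa
      rwa [Function.update_eq_self] at this
  exact MultilinearMap.ext fun x => key Finset.univ x (fun i hi => absurd (Finset.mem_univ i) hi)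

/-- Two linear maps from an iterated tensor product agreeing on pure tensors of pure
tensors are equal. -/
theorem linearMap_ext_of_tprod_tprod {ι κ : Type*} [Fintype ι] [DecidableEq ι]
    {P : Type*} [AddCommGroup P] [Module ℤ P] {M : Type*} [CommRing M]
    (f g : (⨂[ℤ] _ : ι, ⨂[ℤ] _ : κ, M) →ₗ[ℤ] P)
    (h : ∀ r : ι → κ → M,
      f (tprod ℤ (fun j => tprod ℤ (fun i => r j i))) =
      g (tprod ℤ (fun j => tprod ℤ (fun i => r j i)))) : f = g := by
  apply PiTensorProduct.ext
  apply multilinear_ext_of_span _ _ (fun _ => Set.range (PiTensorProduct.tprod ℤ))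
    (fun _ => PiTensorProduct.span_tprod_eq_top)
  intro x hx
  choose r hr using hx
  have hx' : x = fun j => tprod ℤ (r j) := funext fun j => (hr j).symm
  subst hx'
  simpa using h (fun j i => r j i)

/-- the transpose isomorphisms intertwine the twisted last face map
`d_k^{tw} : (R^{⊗n})^{⊗(k+1)} → (R^{⊗n})^{⊗k}` of the Loday construction of the rotation
circle with the last face map `d_k^{sd}` of the `n`-fold edgewise subdivision of the cyclic
bar construction: `T_k ∘ d_k^{tw} = d_k^{sd} ∘ T_{k+1}`.  (Here `n ≥ 1`, `k ≥ 1` are encoded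
as `n+1`, `k+1` for natural numbers `n`, `k`; subtraction in `Fin` is cyclic.) -/
theorem transpose_intertwines_twisted_face (R : Type*) [CommRing R] (n k : ℕ)
    (dtw : (⨂[ℤ] _ : Fin (k + 2), ⨂[ℤ] _ : Fin (n + 1), R) →ₗ[ℤ]
           (⨂[ℤ] _ : Fin (k + 1), ⨂[ℤ] _ : Fin (n + 1), R))
    -- `d^{tw}`: cyclically move the last `R^{⊗(n+1)}`-factor to the front, twist it by the
    -- cyclic permutation of its `R`-coordinates, and multiply the first two factors:
    (hdtw : ∀ r : Fin (k + 2) → Fin (n + 1) → R,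
      dtw (tprod ℤ (fun j => tprod ℤ (fun i => r j i))) =
        tprod ℤ (fun j : Fin (k + 1) => tprod ℤ (fun i : Fin (n + 1) =>
          if j = 0 then r (Fin.last (k + 1)) (i - 1) * r 0 i else r j.castSucc i)))
    (dsd : (⨂[ℤ] _ : Fin (n + 1), ⨂[ℤ] _ : Fin (k + 2), R) →ₗ[ℤ]
           (⨂[ℤ] _ : Fin (n + 1), ⨂[ℤ] _ : Fin (k + 1), R))
    -- `d^{sd}`: in each of the `n+1` factors, the last face map of the cyclic bar
    -- construction twisted by the previous factor:
    (hdsd : ∀ r : Fin (n + 1) → Fin (k + 2) → R,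
      dsd (tprod ℤ (fun i => tprod ℤ (fun j => r i j))) =
        tprod ℤ (fun i : Fin (n + 1) => tprod ℤ (fun j : Fin (k + 1) =>
          if j = 0 then r (i - 1) (Fin.last (k + 1)) * r i 0 else r i j.castSucc)))
    (T1 : (⨂[ℤ] _ : Fin (k + 2), ⨂[ℤ] _ : Fin (n + 1), R) →ₗ[ℤ]
          (⨂[ℤ] _ : Fin (n + 1), ⨂[ℤ] _ : Fin (k + 2), R))
    (hT1 : ∀ r : Fin (k + 2) → Fin (n + 1) → R,
      T1 (tprod ℤ (fun j => tprod ℤ (fun i => r j i))) =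
        tprod ℤ (fun i => tprod ℤ (fun j => r j i)))
    (T0 : (⨂[ℤ] _ : Fin (k + 1), ⨂[ℤ] _ : Fin (n + 1), R) →ₗ[ℤ]
          (⨂[ℤ] _ : Fin (n + 1), ⨂[ℤ] _ : Fin (k + 1), R))
    (hT0 : ∀ r : Fin (k + 1) → Fin (n + 1) → R,
      T0 (tprod ℤ (fun j => tprod ℤ (fun i => r j i))) =
        tprod ℤ (fun i => tprod ℤ (fun j => r j i))) :
    T0.comp dtw = dsd.comp T1 := by
  apply linearMap_ext_of_tprod_tprod
  intro r
  simp only [LinearMap.comp_apply, hdtw, hT1, hT0, hdsd]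
end

section
/- Let R be a commutative ring and let f, g : X → Y be simplicial maps between simplicial sets that are simplicially homotopic via a homotopy H : X × Δ¹ → Y. Then the induced morphisms of simplicial commutative rings f_*, g_* : L_X(R) → L_Y(R) are simplicially homotopic, where L_X(R) is the simplicial commutative ring with n-simplices ⊗_{x ∈ X_n} R and structure maps induced by those of X. -/
open CategoryTheory CategoryTheory.Limits Simplicial Opposite

/-- A (combinatorial) simplicial homotopy between two morphisms of simplicial objects:
component maps `h_j : A_n ⟶ B_{n+1}` (`0 ≤ j ≤ n`) satisfying the standard simplicial
homotopy identities, connecting `f` and `g`. -/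
def IsSimplicialHomotopy {C : Type*} [Category C] {A B : SimplicialObject C}
    (f g : A ⟶ B) : Prop :=
  ∃ h : ∀ n j : ℕ, j ≤ n → (A _⦋n⦌ ⟶ B _⦋n + 1⦌),
    -- d_0 h_0 = f
    (∀ n : ℕ, h n 0 (Nat.zero_le n) ≫ B.δ (0 : Fin (n + 2)) = f.app (op ⦋n⦌)) ∧
    -- d_{n+1} h_n = g
    (∀ n : ℕ, h n n le_rfl ≫ B.δ ⟨n + 1, by omega⟩ = g.app (op ⦋n⦌)) ∧
    -- d_i h_j = h_{j-1} d_i for i < j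
    (∀ n i j : ℕ, ∀ _ : i < j, ∀ hj : j ≤ n + 1,
      h (n + 1) j hj ≫ B.δ ⟨i, by omega⟩ =
        A.δ (⟨i, by omega⟩ : Fin (n + 2)) ≫ h n (j - 1) (by omega)) ∧
    -- d_{j+1} h_{j+1} = d_{j+1} h_j
    (∀ n j : ℕ, ∀ hj : j + 1 ≤ n,
      h n (j + 1) hj ≫ B.δ ⟨j + 1, by omega⟩ = h n j (by omega) ≫ B.δ ⟨j + 1, by omega⟩) ∧
    -- d_i h_j = h_j d_{i-1} for i > j+1
    (∀ n i j : ℕ, ∀ _ : j + 1 < i, ∀ _ : i ≤ n + 2, ∀ hj : j ≤ n + 1,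
      h (n + 1) j hj ≫ B.δ ⟨i, by omega⟩ =
        A.δ (⟨i - 1, by omega⟩ : Fin (n + 2)) ≫ h n j (by omega)) ∧
    -- s_i h_j = h_{j+1} s_i for i ≤ j
    (∀ n i j : ℕ, ∀ _ : i ≤ j, ∀ hj : j ≤ n,
      h n j hj ≫ B.σ ⟨i, by omega⟩ =
        A.σ (⟨i, by omega⟩ : Fin (n + 1)) ≫ h (n + 1) (j + 1) (by omega)) ∧
    -- s_i h_j = h_j s_{i-1} for i > j
    (∀ n i j : ℕ, ∀ _ : j < i, ∀ _ : i ≤ n + 1, ∀ hj : j ≤ n,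
      h n j hj ≫ B.σ ⟨i, by omega⟩ =
        A.σ (⟨i - 1, by omega⟩ : Fin (n + 1)) ≫ h (n + 1) j (by omega))

/-- The Loday functor on sets: `S ↦ ⊗_{s ∈ S} R`, the `S`-indexed coproduct of copies of `R`
in commutative rings; a map `φ : S → T` induces the map multiplying tensor factors over the
preimages of `φ`. -/
noncomputable def lodayFunctor (R : CommRingCat.{0}) : Type ⥤ CommRingCat.{0} where
  obj S := ∐ (fun _ : S => R)
  map {S T} φ := Sigma.desc fun s => Sigma.ι (fun _ : T => R) (φ s)

/-- if `f, g : X → Y` are simplicially homotopic maps of simplicial sets, then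
the induced morphisms `f_*, g_* : L_X(R) → L_Y(R)` of simplicial commutative rings between
the Loday constructions are simplicially homotopic. -/
theorem loday_homotopy_invariance (R : CommRingCat.{0}) (X Y : SSet.{0}) (f g : X ⟶ Y)
    (H : IsSimplicialHomotopy f g) :
    IsSimplicialHomotopy
      (Functor.whiskerRight f (lodayFunctor R) : X ⋙ lodayFunctor R ⟶ Y ⋙ lodayFunctor R)
      (Functor.whiskerRight g (lodayFunctor R)) := by
  obtain ⟨h, h0, hn, hlt, heq, hgt, hs1, hs2⟩ := H
  refine ⟨fun n j hj => (lodayFunctor R).map (h n j hj), ?_, ?_, ?_, ?_, ?_, ?_, ?_⟩ <;>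
    intros <;>
    simp only [SimplicialObject.δ, SimplicialObject.σ, Functor.comp_map, Functor.whiskerRight_app,
      ← Functor.map_comp] <;>
    congr 1
  · exact h0 _
  · exact hn _
  · exact hlt _ _ _ ‹_› _
  · exact heq _ _ _
  · exact hgt _ _ _ ‹_› ‹_› _
  · exact hs1 _ _ _ ‹_› _
  · exact hs2 _ _ _ ‹_› ‹_› _
end
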